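/- Let X be a nonempty finite type, let p_d and p_n be pmfs on X with p_n x > 0 for every x, let 0 < α < 1, ν > 0, and set q x = α * p_d x + (1 − α) * p_n x. Let k ∈ ℕ and let φ : ℝ^k → X → ℝ be such that for every x the map θ ↦ φ θ x is differentiable on ℝ^k. Define Ĵ : ℝ^k → ℝ by Ĵ(θ) = Σ_x q x * log (exp (φ θ x) / (exp (φ θ x) + ν * p_n x)) + ν * Σ_x p_n x * log (ν * p_n x / (exp (φ θ x) + ν * p_n x)), and define P0(θ, x) = exp (φ θ x) / (exp (φ θ x) + ν * p_n x) and P1(θ, x) = 1 − P0(θ, x). Then Ĵ is differentiable and its gradient at every θ ∈ ℝ^k is ∇Ĵ(θ) = α * Σ_x p_d x * P1(θ, x) * ∇_θ φ θ x + (1 − α) * Σ_x p_n x * P1(θ, x) * ∇_θ φ θ x − ν * Σ_x p_n x * P0(θ, x) * ∇_θ φ θ x. -/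

import Mathlib

/-!
Each summand of `Ĵ` depends on `θ` only through `t = φ θ x`. With `c = ν p_n x > 0` and
`σ(t) = eᵗ / (eᵗ + c)`, the identities `log (eᵗ / (eᵗ + c)) = t - log (eᵗ + c)` and
`log (c / (eᵗ + c)) = log c - log (eᵗ + c)` give derivatives `1 - σ` and `-σ`, and `σ(φ θ x)` is
exactly `P0(θ, x)`. The chain rule then yields the gradient, and splitting
`q = α p_d + (1 - α) p_n` puts it in the stated form.
-/

open Real Finset

theorem hasGradientAt_sum_comp {ι E : Type*} [Fintype ι] [NormedAddCommGroup E]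
    [InnerProductSpace ℝ E] [CompleteSpace E] {g g' : ι → ℝ → ℝ} {φ : E → ι → ℝ} {θ : E}
    (hg : ∀ i, HasDerivAt (g i) (g' i (φ θ i)) (φ θ i))
    (hφ : ∀ i, DifferentiableAt ℝ (fun θ => φ θ i) θ) :
    HasGradientAt (fun θ => ∑ i, g i (φ θ i))
      (∑ i, g' i (φ θ i) • gradient (fun θ => φ θ i) θ) θ := by
  rw [hasGradientAt_iff_hasFDerivAt, map_sum]
  refine HasFDerivAt.fun_sum fun i _ => ?_
  rw [map_smul, toDual_gradient]
  exact (hg i).comp_hasFDerivAt θ (hφ i).hasFDerivAt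

theorem hasDerivAt_log_exp_add {c : ℝ} (hc : 0 ≤ c) (t : ℝ) :
    HasDerivAt (fun t => log (exp t + c)) (exp t / (exp t + c)) t :=
  ((hasDerivAt_exp t).add_const c).log (by positivity)

theorem hasDerivAt_log_exp_div_exp_add {c : ℝ} (hc : 0 ≤ c) (t : ℝ) :
    HasDerivAt (fun t => log (exp t / (exp t + c))) (1 - exp t / (exp t + c)) t := by
  have h : (fun t => log (exp t / (exp t + c))) = fun t => t - log (exp t + c) :=
    funext fun t => by rw [log_div (exp_ne_zero t) (by positivity), log_exp]
  rw [h]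
  exact (hasDerivAt_id t).sub (hasDerivAt_log_exp_add hc t)

theorem hasDerivAt_log_div_exp_add {c : ℝ} (hc : 0 < c) (t : ℝ) :
    HasDerivAt (fun t => log (c / (exp t + c))) (-(exp t / (exp t + c))) t := by
  have h : (fun t => log (c / (exp t + c))) = fun t => log c - log (exp t + c) :=
    funext fun t => by rw [log_div hc.ne' (by positivity)]
  rw [h]
  exact (hasDerivAt_log_exp_add hc.le t).const_sub _

theorem stmt_8_general {X : Type*} [Fintype X]
    (pd pn : X → ℝ)
    (hpn0 : ∀ x, 0 < pn x)
    (α ν : ℝ) (hν : 0 < ν)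
    (q : X → ℝ) (hq : ∀ x, q x = α * pd x + (1 - α) * pn x)
    (k : ℕ)
    (φ : EuclideanSpace ℝ (Fin k) → X → ℝ)
    (hφ : ∀ x, Differentiable ℝ (fun θ => φ θ x))
    (Jhat : EuclideanSpace ℝ (Fin k) → ℝ)
    (hJhat : ∀ θ, Jhat θ = ∑ x, q x * Real.log (Real.exp (φ θ x) / (Real.exp (φ θ x) + ν * pn x))
        + ν * ∑ x, pn x * Real.log (ν * pn x / (Real.exp (φ θ x) + ν * pn x)))
    (P0 P1 : EuclideanSpace ℝ (Fin k) → X → ℝ)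
    (hP0 : ∀ θ x, P0 θ x = Real.exp (φ θ x) / (Real.exp (φ θ x) + ν * pn x))
    (hP1 : ∀ θ x, P1 θ x = 1 - P0 θ x) :
    Differentiable ℝ Jhat ∧
      ∀ θ, gradient Jhat θ =
        α • (∑ x, (pd x * P1 θ x) • gradient (fun θ' => φ θ' x) θ)
          + (1 - α) • (∑ x, (pn x * P1 θ x) • gradient (fun θ' => φ θ' x) θ)
          - ν • ∑ x, (pn x * P0 θ x) • gradient (fun θ' => φ θ' x) θ := by
  have hc : ∀ x, 0 < ν * pn x := fun x => mul_pos hν (hpn0 x)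
  have hJ : Jhat = fun θ => ∑ x, (fun t => q x * log (exp t / (exp t + ν * pn x))
      + ν * (pn x * log (ν * pn x / (exp t + ν * pn x)))) (φ θ x) :=
    funext fun θ => by rw [hJhat, mul_sum, ← sum_add_distrib]
  have hgrad : ∀ θ, HasGradientAt Jhat
      (∑ x, (q x * P1 θ x + ν * (pn x * -P0 θ x)) • gradient (fun θ' => φ θ' x) θ) θ := by
    intro θ
    simp only [hJ, hP1, hP0]
    exact hasGradientAt_sum_comp
      (g' := fun x t => q x * (1 - exp t / (exp t + ν * pn x))
        + ν * (pn x * -(exp t / (exp t + ν * pn x))))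
      (fun x => ((hasDerivAt_log_exp_div_exp_add (hc x).le _).const_mul (q x)).add
        (((hasDerivAt_log_div_exp_add (hc x) _).const_mul (pn x)).const_mul ν))
      (fun x => hφ x θ)
  refine ⟨fun θ => (hgrad θ).differentiableAt, fun θ => ?_⟩
  rw [(hgrad θ).gradient, smul_sum, smul_sum, smul_sum, ← sum_add_distrib, ← sum_sub_distrib]
  refine sum_congr rfl fun x _ => ?_
  simp only [smul_smul, ← add_smul, ← sub_smul, hq]
  congr 1
  ring

/-- Differentiability and gradient formula for the DNCE objective with interpolated data
distribution `q = α p_d + (1-α) p_n`: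
`∇Ĵ(θ) = α Σ_x p_d x * P1(θ,x) • ∇_θ φ θ x + (1-α) Σ_x p_n x * P1(θ,x) • ∇_θ φ θ x
       − ν • Σ_x p_n x * P0(θ,x) • ∇_θ φ θ x`. -/
theorem stmt_8 {X : Type*} [Fintype X] [Nonempty X]
    (pd pn : X → ℝ)
    (hpd0 : ∀ x, 0 ≤ pd x) (hpd1 : ∑ x, pd x = 1)
    (hpn0 : ∀ x, 0 < pn x) (hpn1 : ∑ x, pn x = 1)
    (α ν : ℝ) (hα0 : 0 < α) (hα1 : α < 1) (hν : 0 < ν)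
    (q : X → ℝ) (hq : ∀ x, q x = α * pd x + (1 - α) * pn x)
    (k : ℕ)
    (φ : EuclideanSpace ℝ (Fin k) → X → ℝ)
    (hφ : ∀ x, Differentiable ℝ (fun θ => φ θ x))
    (Jhat : EuclideanSpace ℝ (Fin k) → ℝ)
    (hJhat : ∀ θ, Jhat θ = ∑ x, q x * Real.log (Real.exp (φ θ x) / (Real.exp (φ θ x) + ν * pn x))
        + ν * ∑ x, pn x * Real.log (ν * pn x / (Real.exp (φ θ x) + ν * pn x)))
    (P0 P1 : EuclideanSpace ℝ (Fin k) → X → ℝ)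
    (hP0 : ∀ θ x, P0 θ x = Real.exp (φ θ x) / (Real.exp (φ θ x) + ν * pn x))
    (hP1 : ∀ θ x, P1 θ x = 1 - P0 θ x) :
    Differentiable ℝ Jhat ∧
      ∀ θ, gradient Jhat θ =
        α • (∑ x, (pd x * P1 θ x) • gradient (fun θ' => φ θ' x) θ)
          + (1 - α) • (∑ x, (pn x * P1 θ x) • gradient (fun θ' => φ θ' x) θ)
          - ν • ∑ x, (pn x * P0 θ x) • gradient (fun θ' => φ θ' x) θ :=
  stmt_8_general pd pn hpn0 α ν hν q hq k φ hφ Jhat hJhat P0 P1 hP0 hP1
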